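/- Let n ≥ 3 and let η ∈ I_n be the idempotent partial permutation of rank n−1 that is the identity on {2, ..., n} and undefined at 1. If u = u₁ · η · u₂ and v = v₁ · η · v₂ are elements of I_n with u₁, v₁ ∈ S_n permutations and u₂, v₂ ∈ I_n arbitrary, u = v, and both u and v have rank n − 1, then u₁⁻¹ · v₁ fixes the point 1. -/

import Mathlib

/-- The symmetric inverse monoid `I_n` on `{1, ..., n}` is modelled by functions
`Fin (n+1) → Fin (n+1)` where `0` is a sink representing "undefined": `f 0 = 0`,
`f x = 0` means `x ∉ dom f`, and `f` is injective on its domain. Composition of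
partial maps is then left-to-right function composition. -/
def IsIn (n : ℕ) (f : Fin (n + 1) → Fin (n + 1)) : Prop :=
  f 0 = 0 ∧ ∀ x y : Fin (n + 1), f x = f y → f x ≠ 0 → x = y

/-- The rank of a partial permutation: the number of nonzero points in its image. -/
def prank (n : ℕ) (f : Fin (n + 1) → Fin (n + 1)) : ℕ :=
  ((Finset.univ.image f).erase 0).card

/-- The idempotent `η ∈ I_n` of rank `n - 1`: the identity on `{2, ..., n}`,
undefined at `1`. -/
def etaMap (n : ℕ) : Fin (n + 1) → Fin (n + 1) := fun x => if x = 1 then 0 else x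

/-! If `u = v₁ηv₂` had rank `n - 1` while `u = u₁ηu₂` with `v₁(u₁⁻¹ 1) ≠ 1`, then `u` would be
undefined at the three distinct points `0`, `u₁⁻¹ 1` (killed by `η` in the first factorisation)
and `v₁⁻¹ 1` (killed by `η` in the second), leaving at most `n - 2` points of `{1, …, n}` in
its domain. -/

theorem etaMap_zero (n : ℕ) : etaMap n 0 = 0 :=
  ite_self 0

theorem etaMap_one (n : ℕ) : etaMap n 1 = 0 :=
  if_pos rfl

theorem prank_le_of_forall_mem_eq_zero {n : ℕ} {f : Fin (n + 1) → Fin (n + 1)}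
    (s : Finset (Fin (n + 1))) (hs : ∀ x ∈ s, f x = 0) : prank n f ≤ n + 1 - s.card := by
  have hsub : (Finset.univ.image f).erase 0 ⊆ sᶜ.image f := by
    intro y hy
    obtain ⟨hy0, x, -, rfl⟩ := by simpa only [Finset.mem_erase, Finset.mem_image] using hy
    exact Finset.mem_image_of_mem f (Finset.mem_compl.2 fun hx => hy0 (hs x hx))
  calc prank n f ≤ (sᶜ.image f).card := Finset.card_le_card hsub
    _ ≤ sᶜ.card := Finset.card_image_le
    _ = n + 1 - s.card := by rw [Finset.card_compl, Fintype.card_fin]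

theorem stmt10_general (n : ℕ) (hn : 3 ≤ n)
    (u₁ v₁ : Equiv.Perm (Fin (n + 1))) (hu₁ : u₁ 0 = 0) (hv₁ : v₁ 0 = 0)
    (u₂ v₂ : Fin (n + 1) → Fin (n + 1)) (hu₂ : IsIn n u₂) (hv₂ : IsIn n v₂)
    (heq : (fun x => u₂ (etaMap n (u₁ x))) = (fun x => v₂ (etaMap n (v₁ x))))
    (hrv : prank n (fun x => v₂ (etaMap n (v₁ x))) = n - 1) :
    v₁ (u₁⁻¹ (1 : Fin (n + 1))) = 1 := by
  by_contra hne
  have : NeZero n := ⟨by omega⟩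
  have h10 : (1 : Fin (n + 1)) ≠ 0 := Fin.one_pos'.ne'
  have hu0 : u₁⁻¹ 1 ≠ 0 := fun h => h10 (by simpa [hu₁] using congrArg u₁ h)
  have hv0 : v₁⁻¹ 1 ≠ 0 := fun h => h10 (by simpa [hv₁] using congrArg v₁ h)
  have huv : u₁⁻¹ 1 ≠ v₁⁻¹ 1 := fun h => hne (by simp [h])
  have hkernel : ∀ x ∈ ({0, u₁⁻¹ 1, v₁⁻¹ 1} : Finset (Fin (n + 1))),
      v₂ (etaMap n (v₁ x)) = 0 := by
    simp only [Finset.mem_insert, Finset.mem_singleton]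
    rintro x (rfl | rfl | rfl)
    · rw [hv₁, etaMap_zero, hv₂.1]
    · rw [← congrFun heq, Equiv.Perm.coe_inv, Equiv.apply_symm_apply, etaMap_one, hu₂.1]
    · rw [Equiv.Perm.coe_inv, Equiv.apply_symm_apply, etaMap_one, hv₂.1]
  have hcard : ({0, u₁⁻¹ 1, v₁⁻¹ 1} : Finset (Fin (n + 1))).card = 3 :=
    Finset.card_eq_three.2 ⟨_, _, _, hu0.symm, hv0.symm, huv, rfl⟩
  have hle := prank_le_of_forall_mem_eq_zero _ hkernel
  omega

/-- If `u = u₁ηu₂` and `v = v₁ηv₂` in `I_n` (products left-to-right) with `u₁, v₁`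
permutations, `u = v`, and both have rank `n - 1`, then `u₁⁻¹v₁` fixes `1`. -/
theorem stmt10 (n : ℕ) (hn : 3 ≤ n)
    (u₁ v₁ : Equiv.Perm (Fin (n + 1))) (hu₁ : u₁ 0 = 0) (hv₁ : v₁ 0 = 0)
    (u₂ v₂ : Fin (n + 1) → Fin (n + 1)) (hu₂ : IsIn n u₂) (hv₂ : IsIn n v₂)
    (heq : (fun x => u₂ (etaMap n (u₁ x))) = (fun x => v₂ (etaMap n (v₁ x))))
    (hru : prank n (fun x => u₂ (etaMap n (u₁ x))) = n - 1)
    (hrv : prank n (fun x => v₂ (etaMap n (v₁ x))) = n - 1) :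
    v₁ (u₁⁻¹ (1 : Fin (n + 1))) = 1 :=
  stmt10_general n hn u₁ v₁ hu₁ hv₁ u₂ v₂ hu₂ hv₂ heq hrv
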